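/- Let C be a monoidal category which is preadditive with binary biproducts, and in which tensoring with a fixed object is additive (MonoidalPreadditive). Let X and Y be objects, let (coev₁ : 𝟙_C ⟶ X ⊗ Y, ev₁ : Y ⊗ X ⟶ 𝟙_C) be an exact pairing of X with Y, and let (coev₂ : 𝟙_C ⟶ Y ⊗ X, ev₂ : X ⊗ Y ⟶ 𝟙_C) be an exact pairing of Y with X. Set Z := X ⊞ Y (the biproduct), with injections ι_X : X ⟶ Z, ι_Y : Y ⟶ Z and projections π_X : Z ⟶ X, π_Y : Z ⟶ Y. Define coev : 𝟙_C ⟶ Z ⊗ Z by coev := coev₁ ≫ (ι_X ⊗ ι_Y) + coev₂ ≫ (ι_Y ⊗ ι_X), and ev : Z ⊗ Z ⟶ 𝟙_C by ev := (π_Y ⊗ π_X) ≫ ev₁ + (π_X ⊗ π_Y) ≫ ev₂. Then (coev, ev) is an exact pairing of Z with itself, i.e. Z is self-dual. -/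

import Mathlib

/-!
Write `Z = X ⊞ Y`. Each zig-zag composite `Z ⟶ Z` is biadditive in the pair `(coev, ev)` and
natural in everything it involves, so its `(X, X)`, `(X, Y)`, `(Y, X)`, `(Y, Y)` components are
sums of zig-zag composites of the given pairings, precomposed and postcomposed with products of
biproduct injections and projections. Orthogonality of the biproduct kills every cross term:
the diagonal components are the zig-zags of the two given pairings, hence identities, and the
off-diagonal ones vanish.
-/

open CategoryTheory Category MonoidalCategory CategoryTheory.Limits

/-- An exact pairing of `X` with `Y` in a monoidal category: a pair of morphisms
`coev : 𝟙_ C ⟶ X ⊗ Y` and `ev : Y ⊗ X ⟶ 𝟙_ C` satisfying the two zig-zag identities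
(the axioms of Mathlib's `CategoryTheory.ExactPairing X Y`). -/
def IsExactPairing {C : Type*} [Category C] [MonoidalCategory C] (X Y : C)
    (coev : 𝟙_ C ⟶ X ⊗ Y) (ev : Y ⊗ X ⟶ 𝟙_ C) : Prop :=
  (Y ◁ coev ≫ (α_ Y X Y).inv ≫ ev ▷ Y = (ρ_ Y).hom ≫ (λ_ Y).inv) ∧
  (coev ▷ X ≫ (α_ X Y X).hom ≫ X ◁ ev = (λ_ X).hom ≫ (ρ_ X).inv)

namespace ZigZag
variable {C : Type*} [Category C] [MonoidalCategory C]

/- The two zig-zag composites, with the object `W` that is snaked through allowed to differ from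
the pairing's own objects, so that they can be restricted along injections and projections. -/
def coevalEval {W A B : C} (c : 𝟙_ C ⟶ A ⊗ B) (e : W ⊗ A ⟶ 𝟙_ C) : W ⟶ B :=
  (ρ_ W).inv ≫ W ◁ c ≫ (α_ W A B).inv ≫ e ▷ B ≫ (λ_ B).hom

def evalCoeval {W A B : C} (c : 𝟙_ C ⟶ A ⊗ B) (e : B ⊗ W ⟶ 𝟙_ C) : W ⟶ A :=
  (λ_ W).inv ≫ c ▷ W ≫ (α_ A B W).hom ≫ A ◁ e ≫ (ρ_ A).hom

theorem isExactPairing_iff {X Y : C} (coev : 𝟙_ C ⟶ X ⊗ Y) (ev : Y ⊗ X ⟶ 𝟙_ C) :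
    IsExactPairing X Y coev ev ↔ coevalEval coev ev = 𝟙 Y ∧ evalCoeval coev ev = 𝟙 X := by
  refine and_congr ⟨fun h => by simp [coevalEval, reassoc_of% h], fun h => ?_⟩
    ⟨fun h => by simp [evalCoeval, reassoc_of% h], fun h => ?_⟩
  · rw [← cancel_epi (ρ_ Y).inv, ← cancel_mono (λ_ Y).hom]
    simpa [coevalEval] using h
  · rw [← cancel_epi (λ_ X).inv, ← cancel_mono (ρ_ X).hom]
    simpa [evalCoeval] using h

theorem comp_coevalEval {V W A B : C} (f : V ⟶ W) (c : 𝟙_ C ⟶ A ⊗ B) (e : W ⊗ A ⟶ 𝟙_ C) :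
    f ≫ coevalEval c e = coevalEval c (f ▷ A ≫ e) := by
  rw [coevalEval, coevalEval, rightUnitor_inv_naturality_assoc, ← whisker_exchange_assoc,
    associator_inv_naturality_left_assoc, comp_whiskerRight_assoc]

theorem coevalEval_comp {W A B B' : C} (c : 𝟙_ C ⟶ A ⊗ B) (e : W ⊗ A ⟶ 𝟙_ C) (g : B ⟶ B') :
    coevalEval c e ≫ g = coevalEval (c ≫ A ◁ g) e := by
  simp only [coevalEval, assoc, ← leftUnitor_naturality, whisker_exchange_assoc,
    associator_inv_naturality_right_assoc, MonoidalCategory.whiskerLeft_comp_assoc]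

theorem coevalEval_comp_whiskerRight {W A A' B : C} (c : 𝟙_ C ⟶ A ⊗ B) (f : A ⟶ A')
    (e : W ⊗ A' ⟶ 𝟙_ C) : coevalEval (c ≫ f ▷ B) e = coevalEval c (W ◁ f ≫ e) := by
  simp [coevalEval]

theorem comp_evalCoeval {V W A B : C} (f : V ⟶ W) (c : 𝟙_ C ⟶ A ⊗ B) (e : B ⊗ W ⟶ 𝟙_ C) :
    f ≫ evalCoeval c e = evalCoeval c (B ◁ f ≫ e) := by
  rw [evalCoeval, evalCoeval, leftUnitor_inv_naturality_assoc, whisker_exchange_assoc,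
    associator_naturality_right_assoc, MonoidalCategory.whiskerLeft_comp_assoc]

theorem evalCoeval_comp {W A A' B : C} (c : 𝟙_ C ⟶ A ⊗ B) (e : B ⊗ W ⟶ 𝟙_ C) (g : A ⟶ A') :
    evalCoeval c e ≫ g = evalCoeval (c ≫ g ▷ B) e := by
  simp only [evalCoeval, assoc, ← rightUnitor_naturality, ← whisker_exchange_assoc,
    associator_naturality_left_assoc, comp_whiskerRight_assoc]

theorem evalCoeval_comp_whiskerLeft {W A B B' : C} (c : 𝟙_ C ⟶ A ⊗ B) (f : B ⟶ B')
    (e : B' ⊗ W ⟶ 𝟙_ C) : evalCoeval (c ≫ A ◁ f) e = evalCoeval c (f ▷ W ≫ e) := by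
  simp [evalCoeval]

theorem coevalEval_tensorHom {W A B Z Z' : C} (c : 𝟙_ C ⟶ A ⊗ B) (i : A ⟶ Z) (j : B ⟶ Z')
    (e : W ⊗ Z ⟶ 𝟙_ C) : coevalEval (c ≫ (i ⊗ₘ j)) e = coevalEval c (W ◁ i ≫ e) ≫ j := by
  rw [MonoidalCategory.tensorHom_def, ← assoc, ← coevalEval_comp, coevalEval_comp_whiskerRight]

theorem evalCoeval_tensorHom {W A B Z Z' : C} (c : 𝟙_ C ⟶ A ⊗ B) (i : A ⟶ Z) (j : B ⟶ Z')
    (e : Z' ⊗ W ⟶ 𝟙_ C) : evalCoeval (c ≫ (i ⊗ₘ j)) e = evalCoeval c (j ▷ W ≫ e) ≫ i := by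
  rw [MonoidalCategory.tensorHom_def', ← assoc, ← evalCoeval_comp, evalCoeval_comp_whiskerLeft]

theorem comp_coevalEval_comp {W Z A B P Q V : C} (ι : W ⟶ Z) (c : 𝟙_ C ⟶ A ⊗ B) (i : A ⟶ Z)
    (j : B ⟶ Z) (p : Z ⟶ P) (q : Z ⟶ Q) (e : P ⊗ Q ⟶ 𝟙_ C) (π : Z ⟶ V) :
    ι ≫ coevalEval (c ≫ (i ⊗ₘ j)) ((p ⊗ₘ q) ≫ e) ≫ π =
      coevalEval c (((ι ≫ p) ⊗ₘ (i ≫ q)) ≫ e) ≫ j ≫ π := by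
  simp only [coevalEval_tensorHom, assoc]
  rw [reassoc_of% comp_coevalEval, ← MonoidalCategory.tensorHom_def_assoc,
    tensorHom_comp_tensorHom_assoc]

theorem comp_evalCoeval_comp {W Z A B P Q V : C} (ι : W ⟶ Z) (c : 𝟙_ C ⟶ A ⊗ B) (i : A ⟶ Z)
    (j : B ⟶ Z) (p : Z ⟶ P) (q : Z ⟶ Q) (e : P ⊗ Q ⟶ 𝟙_ C) (π : Z ⟶ V) :
    ι ≫ evalCoeval (c ≫ (i ⊗ₘ j)) ((p ⊗ₘ q) ≫ e) ≫ π =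
      evalCoeval c (((j ≫ p) ⊗ₘ (ι ≫ q)) ≫ e) ≫ i ≫ π := by
  simp only [evalCoeval_tensorHom, assoc]
  rw [reassoc_of% comp_evalCoeval, ← MonoidalCategory.tensorHom_def'_assoc,
    tensorHom_comp_tensorHom_assoc]

section Preadditive
variable [Preadditive C] [MonoidalPreadditive C]

theorem coevalEval_add_left {W A B : C} (c c' : 𝟙_ C ⟶ A ⊗ B) (e : W ⊗ A ⟶ 𝟙_ C) :
    coevalEval (c + c') e = coevalEval c e + coevalEval c' e := by
  simp [coevalEval]

theorem coevalEval_add_right {W A B : C} (c : 𝟙_ C ⟶ A ⊗ B) (e e' : W ⊗ A ⟶ 𝟙_ C) :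
    coevalEval c (e + e') = coevalEval c e + coevalEval c e' := by
  simp [coevalEval]

theorem coevalEval_zero_right {W A B : C} (c : 𝟙_ C ⟶ A ⊗ B) :
    coevalEval c (0 : W ⊗ A ⟶ 𝟙_ C) = 0 := by
  simp [coevalEval]

theorem evalCoeval_add_left {W A B : C} (c c' : 𝟙_ C ⟶ A ⊗ B) (e : B ⊗ W ⟶ 𝟙_ C) :
    evalCoeval (c + c') e = evalCoeval c e + evalCoeval c' e := by
  simp [evalCoeval]

theorem evalCoeval_add_right {W A B : C} (c : 𝟙_ C ⟶ A ⊗ B) (e e' : B ⊗ W ⟶ 𝟙_ C) :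
    evalCoeval c (e + e') = evalCoeval c e + evalCoeval c e' := by
  simp [evalCoeval]

theorem evalCoeval_zero_right {W A B : C} (c : 𝟙_ C ⟶ A ⊗ B) :
    evalCoeval c (0 : B ⊗ W ⟶ 𝟙_ C) = 0 := by
  simp [evalCoeval]

end Preadditive

end ZigZag

open ZigZag

/-- If `Y` is a right dual of `X` and `X` is a right dual of `Y`, then the biproduct
`X ⊞ Y` is self-dual, with the indicated coevaluation and evaluation.  This is the
self-dual structure on `V ⊕ *V` of Example 2.3 of the paper. -/
theorem isExactPairing_biprod_selfDual {C : Type*} [Category C] [MonoidalCategory C]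
    [Preadditive C] [MonoidalPreadditive C] [HasBinaryBiproducts C]
    (X Y : C) (coev₁ : 𝟙_ C ⟶ X ⊗ Y) (ev₁ : Y ⊗ X ⟶ 𝟙_ C)
    (coev₂ : 𝟙_ C ⟶ Y ⊗ X) (ev₂ : X ⊗ Y ⟶ 𝟙_ C)
    (h₁ : IsExactPairing X Y coev₁ ev₁) (h₂ : IsExactPairing Y X coev₂ ev₂) :
    IsExactPairing (X ⊞ Y) (X ⊞ Y)
      (coev₁ ≫ ((biprod.inl : X ⟶ X ⊞ Y) ⊗ₘ (biprod.inr : Y ⟶ X ⊞ Y)) +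
        coev₂ ≫ ((biprod.inr : Y ⟶ X ⊞ Y) ⊗ₘ (biprod.inl : X ⟶ X ⊞ Y)))
      (((biprod.snd : X ⊞ Y ⟶ Y) ⊗ₘ (biprod.fst : X ⊞ Y ⟶ X)) ≫ ev₁ +
        ((biprod.fst : X ⊞ Y ⟶ X) ⊗ₘ (biprod.snd : X ⊞ Y ⟶ Y)) ≫ ev₂) := by
  rw [isExactPairing_iff] at h₁ h₂ ⊢
  constructor
  · ext <;> simp [coevalEval_add_left, coevalEval_add_right, comp_coevalEval_comp,
      coevalEval_zero_right, h₁.1, h₂.1]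
  · ext <;> simp [evalCoeval_add_left, evalCoeval_add_right, comp_evalCoeval_comp,
      evalCoeval_zero_right, h₁.2, h₂.2]
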